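/- Let Λ = ℤv₁ ⊕ ℤv₂ ⊂ ℝ² be a lattice and let Φ : ℝ² → S³ ⊂ ℝ⁴ be a smooth Λ-periodic conformal immersion into S³ whose conformal factor e^λ is a constant function and whose mean curvature H is a constant function (a flat CMC torus). Then there exist constants Q₁, Q₂ ∈ ℝ such that H = 4 e^{−4λ}(Q₁ I⁰₁₁ − Q₂ I⁰₁₂) at every point of ℝ² and 4 e^{−2λ} √(Q₁² + Q₂²) < 1; that is, Φ satisfies the strictly elliptic conformally constrained minimal surface equation. -/

import Mathlib

noncomputable section

open Real MeasureTheory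
open scoped ENNReal RealInnerProductSpace

/-- The plane `ℝ²`. -/
abbrev RR2 := ℝ × ℝ
/-- Euclidean `ℝ⁴`. -/
abbrev RR4 := EuclideanSpace ℝ (Fin 4)

/-- Partial derivative in the `x₁` direction of an `ℝ⁴`-valued map on `ℝ²`. -/
def d1 (f : RR2 → RR4) (x : RR2) : RR4 := fderiv ℝ f x (1, 0)
/-- Partial derivative in the `x₂` direction of an `ℝ⁴`-valued map on `ℝ²`. -/
def d2 (f : RR2 → RR4) (x : RR2) : RR4 := fderiv ℝ f x (0, 1)
/-- Partial derivative in the `x₁` direction of a scalar map on `ℝ²`. -/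
def d1s (f : RR2 → ℝ) (x : RR2) : ℝ := fderiv ℝ f x (1, 0)
/-- Partial derivative in the `x₂` direction of a scalar map on `ℝ²`. -/
def d2s (f : RR2 → ℝ) (x : RR2) : ℝ := fderiv ℝ f x (0, 1)

/-- Determinant of four vectors of `ℝ⁴`. -/
def det4 (a b c d : RR4) : ℝ :=
  Matrix.det (Matrix.of ![(fun i => a i), (fun i => b i), (fun i => c i), (fun i => d i)])

/-- `Φ : U → S³ ⊂ ℝ⁴` is a smooth conformal immersion into `S³` with conformal factor
`e^lam` and (positively oriented) Gauss map `n`. -/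
structure IsConformalImmersionS3 (U : Set RR2) (Φ : RR2 → RR4) (lam : RR2 → ℝ)
    (n : RR2 → RR4) : Prop where
  smooth_Phi : ContDiffOn ℝ (⊤ : ℕ∞) Φ U
  smooth_lam : ContDiffOn ℝ (⊤ : ℕ∞) lam U
  smooth_n : ContDiffOn ℝ (⊤ : ℕ∞) n U
  mem_sphere : ∀ x ∈ U, ‖Φ x‖ = 1
  conf_orth : ∀ x ∈ U, ⟪d1 Φ x, d2 Φ x⟫ = 0
  conf_norm1 : ∀ x ∈ U, ‖d1 Φ x‖ = exp (lam x)
  conf_norm2 : ∀ x ∈ U, ‖d2 Φ x‖ = exp (lam x)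
  n_norm : ∀ x ∈ U, ‖n x‖ = 1
  n_orth_Phi : ∀ x ∈ U, ⟪n x, Φ x⟫ = 0
  n_orth_d1 : ∀ x ∈ U, ⟪n x, d1 Φ x⟫ = 0
  n_orth_d2 : ∀ x ∈ U, ⟪n x, d2 Φ x⟫ = 0
  oriented : ∀ x ∈ U, 0 < det4 (Φ x) (d1 Φ x) (d2 Φ x) (n x)

/-- Second fundamental form coefficient `I₁₁ = n·∂²_{x₁x₁}Φ`. -/
def I11 (Φ n : RR2 → RR4) (x : RR2) : ℝ := ⟪n x, d1 (d1 Φ) x⟫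
/-- Second fundamental form coefficient `I₁₂ = n·∂²_{x₁x₂}Φ`. -/
def I12 (Φ n : RR2 → RR4) (x : RR2) : ℝ := ⟪n x, d2 (d1 Φ) x⟫
/-- Second fundamental form coefficient `I₂₂ = n·∂²_{x₂x₂}Φ`. -/
def I22 (Φ n : RR2 → RR4) (x : RR2) : ℝ := ⟪n x, d2 (d2 Φ) x⟫

/-- Mean curvature `H = (1/2) e^{-2λ} (I₁₁ + I₂₂)`. -/
def meanCurv (Φ : RR2 → RR4) (lam : RR2 → ℝ) (n : RR2 → RR4) (x : RR2) : ℝ :=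
  (1 / 2) * exp (-(2 * lam x)) * (I11 Φ n x + I22 Φ n x)

/-- Trace-free Weingarten coefficient `I⁰₁₁ = (I₁₁ - I₂₂)/2`. -/
def I011 (Φ n : RR2 → RR4) (x : RR2) : ℝ := (I11 Φ n x - I22 Φ n x) / 2
/-- Trace-free Weingarten coefficient `I⁰₁₂ = I₁₂`. -/
def I012 (Φ n : RR2 → RR4) (x : RR2) : ℝ := I12 Φ n x

/-!
Since `λ` is constant, the Christoffel symbols `⟨∂ₖΦ, ∂ᵢ∂ⱼΦ⟩` vanish (they are antisymmetric in
`k, i` and symmetric in `i, j`), so `∂ᵢ∂ⱼΦ = -e^{2λ} δᵢⱼ Φ + Iᵢⱼ n`. Commuting third derivatives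
then gives the Gauss equation `e^{4λ} + I₁₁ I₂₂ = I₁₂²` and the Codazzi equations. As `H` is
constant, Codazzi says that `(I⁰₁₁, I⁰₁₂)` satisfies the Cauchy–Riemann equations (the Hopf
differential is holomorphic), and Gauss says that `(I⁰₁₁)² + (I⁰₁₂)² = e^{4λ}(1 + H²)` is constant;
hence `I⁰₁₁` and `I⁰₁₂` are constant. Finally `Q = H (I⁰₁₁, -I⁰₁₂) / (4(1 + H²))` gives
`Re⟨Q, h⁰⟩ = H` and `2|Q|_g = |H| / √(1 + H²) < 1`.
-/

open scoped ContDiff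

section Calculus

variable {E F : Type*} [NormedAddCommGroup E] [NormedSpace ℝ E]

theorem fderiv_fderiv_apply_comm [NormedAddCommGroup F] [NormedSpace ℝ F] {f : E → F}
    (hf : ContDiff ℝ 2 f) (x v w : E) :
    fderiv ℝ (fun y => fderiv ℝ f y v) x w = fderiv ℝ (fun y => fderiv ℝ f y w) x v := by
  have hdf : DifferentiableAt ℝ (fderiv ℝ f) x :=
    (hf.fderiv_right (m := 1) (by norm_num)).differentiable one_ne_zero x
  rw [fderiv_clm_apply hdf (differentiableAt_const v),
    fderiv_clm_apply hdf (differentiableAt_const w)]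
  simpa using (hf.contDiffAt.isSymmSndFDerivAt (by simp)) w v

theorem contDiff_fderiv_apply [NormedAddCommGroup F] [NormedSpace ℝ F] {f : E → F}
    (hf : ContDiff ℝ ∞ f) (v : E) : ContDiff ℝ ∞ (fun y => fderiv ℝ f y v) :=
  (contDiff_infty_iff_fderiv.1 hf).2.clm_apply contDiff_const

variable [NormedAddCommGroup F] [InnerProductSpace ℝ F]

theorem inner_fderiv_eq_neg_of_inner_const {f g : E → F} {x : E} {c : ℝ}
    (hf : DifferentiableAt ℝ f x) (hg : DifferentiableAt ℝ g x) (hc : ∀ y, ⟪f y, g y⟫ = c)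
    (v : E) : ⟪f x, fderiv ℝ g x v⟫ = -⟪fderiv ℝ f x v, g x⟫ := by
  have h0 : fderiv ℝ (fun y => ⟪f y, g y⟫) x v = 0 := by simp [funext hc]
  rw [fderiv_inner_apply ℝ hf hg] at h0
  linarith

theorem inner_fderiv_eq_zero_of_norm_eq_one {f : E → F} {x : E} (hf : DifferentiableAt ℝ f x)
    (h1 : ∀ y, ‖f y‖ = 1) (v : E) : ⟪f x, fderiv ℝ f x v⟫ = 0 := by
  have := inner_fderiv_eq_neg_of_inner_const hf hf (c := 1) (by simp [h1]) v
  rw [real_inner_comm (f x)] at this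
  linarith

theorem inner_fderiv_fderiv_eq_neg_of_norm_eq_one {f : E → F} (hf : ContDiff ℝ 2 f)
    (h1 : ∀ y, ‖f y‖ = 1) (x v w : E) :
    ⟪f x, fderiv ℝ (fun y => fderiv ℝ f y v) x w⟫ = -⟪fderiv ℝ f x w, fderiv ℝ f x v⟫ :=
  inner_fderiv_eq_neg_of_inner_const (hf.differentiable (by simp) x)
    ((hf.fderiv_right (m := 1) (by norm_num)).differentiable one_ne_zero |>.clm_apply
      (differentiable_const v) x)
    (fun y => inner_fderiv_eq_zero_of_norm_eq_one (hf.differentiable (by simp) y) h1 v) w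

theorem eq_zero_of_antisymm_of_symm {ι G : Type*} [AddGroup G] [IsAddTorsionFree G]
    {T : ι → ι → ι → G} (hanti : ∀ i j k, T i j k = -T j i k)
    (hsymm : ∀ i j k, T i j k = T i k j) (i j k : ι) : T i j k = 0 := by
  rw [← self_eq_neg]
  calc T i j k = -T j i k := hanti i j k
    _ = -T j k i := by rw [hsymm]
    _ = T k j i := by rw [hanti j k i, neg_neg]
    _ = T k i j := hsymm k j i
    _ = -T i k j := hanti k i j
    _ = -T i j k := by rw [hsymm i j k]

theorem inner_fderiv_fderiv_eq_zero_of_inner_fderiv_const {f : E → F} (hf : ContDiff ℝ 2 f)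
    {ι : Type*} (u : ι → E) (hconst : ∀ i j, ∃ c, ∀ y, ⟪fderiv ℝ f y (u i), fderiv ℝ f y (u j)⟫ = c)
    (x : E) (i j k : ι) :
    ⟪fderiv ℝ f x (u i), fderiv ℝ (fun y => fderiv ℝ f y (u j)) x (u k)⟫ = 0 := by
  have hdf : ∀ v, DifferentiableAt ℝ (fun y => fderiv ℝ f y v) x := fun v =>
    ((hf.fderiv_right (m := 1) (by norm_num)).differentiable one_ne_zero).clm_apply
      (differentiable_const v) x
  refine eq_zero_of_antisymm_of_symm
    (T := fun i j k => ⟪fderiv ℝ f x (u i), fderiv ℝ (fun y => fderiv ℝ f y (u j)) x (u k)⟫)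
    (fun i j k => ?_) (fun i j k => by rw [fderiv_fderiv_apply_comm hf x (u j)]) i j k
  · obtain ⟨c, hc⟩ := hconst i j
    rw [inner_fderiv_eq_neg_of_inner_const (hdf _) (hdf _) hc, real_inner_comm]

theorem mul_fderiv_add_mul_fderiv_eq_zero {u v : E → ℝ} {x : E} {r : ℝ}
    (hu : DifferentiableAt ℝ u x) (hv : DifferentiableAt ℝ v x)
    (hr : ∀ y, u y ^ 2 + v y ^ 2 = r) (w : E) :
    u x * fderiv ℝ u x w + v x * fderiv ℝ v x w = 0 := by
  have hd : HasFDerivAt (fun y => u y ^ 2 + v y ^ 2) _ x :=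
    (hu.hasFDerivAt.pow 2).add (hv.hasFDerivAt.pow 2)
  rw [show (fun y => u y ^ 2 + v y ^ 2) = fun _ => r from funext hr] at hd
  have := congrArg (· w) ((hasFDerivAt_const r x).unique hd)
  simp only [zero_apply, add_apply,
    smul_apply, Nat.add_one_sub_one, pow_one, nsmul_eq_mul, Nat.cast_ofNat,
    smul_eq_mul] at this
  linarith

end Calculus

theorem Orthonormal.sum_inner_smul_eq {𝕜 F ι : Type*} [RCLike 𝕜] [NormedAddCommGroup F]
    [InnerProductSpace 𝕜 F] [FiniteDimensional 𝕜 F] [Fintype ι] {e : ι → F}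
    (he : Orthonormal 𝕜 e) (hcard : Fintype.card ι = Module.finrank 𝕜 F) (v : F) :
    ∑ i, inner 𝕜 (e i) v • e i = v := by
  simpa using (OrthonormalBasis.mk he
    (he.linearIndependent.span_eq_top_of_card_eq_finrank' hcard).ge).sum_repr' v

theorem eq_of_d1s_eq_zero_of_d2s_eq_zero {f : RR2 → ℝ} (hf : Differentiable ℝ f)
    (h1 : ∀ x, d1s f x = 0) (h2 : ∀ x, d2s f x = 0) (x y : RR2) : f x = f y := by
  refine is_const_of_fderiv_eq_zero hf (fun z => ?_) x y
  ext
  · exact h1 z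
  · exact h2 z

theorem eq_of_sq_add_sq_const_of_cauchyRiemann {u v : RR2 → ℝ} (hu : Differentiable ℝ u)
    (hv : Differentiable ℝ v) (hcr₁ : ∀ x, d1s u x = -d2s v x) (hcr₂ : ∀ x, d2s u x = d1s v x)
    {r : ℝ} (hr : ∀ x, u x ^ 2 + v x ^ 2 = r) (x y : RR2) : u x = u y ∧ v x = v y := by
  rcases eq_or_ne r 0 with rfl | hr0
  · have h0 : ∀ z, u z = 0 ∧ v z = 0 := fun z => by
      constructor <;> nlinarith [hr z, sq_nonneg (u z), sq_nonneg (v z)]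
    simp [h0]
  have hdu : ∀ z, d1s u z = 0 ∧ d2s u z = 0 := fun z => by
    have e₁ : u z * d1s u z + v z * d1s v z = 0 :=
      mul_fderiv_add_mul_fderiv_eq_zero (hu z) (hv z) hr (1, 0)
    have e₂ : u z * d2s u z + v z * d2s v z = 0 :=
      mul_fderiv_add_mul_fderiv_eq_zero (hu z) (hv z) hr (0, 1)
    constructor <;> refine (mul_eq_zero.1 ?_).resolve_left hr0
    · linear_combination u z * e₁ - v z * e₂ + u z * v z * hcr₂ z + v z ^ 2 * hcr₁ z
        - d1s u z * hr z
    · linear_combination v z * e₁ + u z * e₂ - u z * v z * hcr₁ z + v z ^ 2 * hcr₂ z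
        - d2s u z * hr z
  refine ⟨eq_of_d1s_eq_zero_of_d2s_eq_zero hu (fun z => (hdu z).1) (fun z => (hdu z).2) x y,
    eq_of_d1s_eq_zero_of_d2s_eq_zero hv (fun z => ?_) (fun z => ?_) x y⟩
  · rw [← hcr₂, (hdu z).2]
  · rw [← neg_eq_zero, ← hcr₁, (hdu z).1]

theorem contDiff_d1 {f : RR2 → RR4} (hf : ContDiff ℝ ∞ f) : ContDiff ℝ ∞ (d1 f) :=
  contDiff_fderiv_apply hf _

theorem contDiff_d2 {f : RR2 → RR4} (hf : ContDiff ℝ ∞ f) : ContDiff ℝ ∞ (d2 f) :=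
  contDiff_fderiv_apply hf _

theorem d1_d2_comm {f : RR2 → RR4} (hf : ContDiff ℝ 2 f) (x : RR2) : d1 (d2 f) x = d2 (d1 f) x :=
  fderiv_fderiv_apply_comm hf x _ _

theorem I11_add_I22_eq_of_meanCurv_eq {Φ n : RR2 → RR4} {lam : RR2 → ℝ} {l H : ℝ}
    (hlam : ∀ x, lam x = l) (hH : ∀ x, meanCurv Φ lam n x = H) (x : RR2) :
    I11 Φ n x + I22 Φ n x = 2 * H * exp (2 * l) := by
  have := hH x
  rw [meanCurv, hlam, exp_neg] at this
  field_simp at this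
  linarith

def coordVec : Fin 2 → RR2 := ![(1, 0), (0, 1)]

namespace IsConformalImmersionS3

variable {Φ n : RR2 → RR4} {lam : RR2 → ℝ} {l : ℝ}

theorem contDiff_Phi (h : IsConformalImmersionS3 Set.univ Φ lam n) : ContDiff ℝ ∞ Φ :=
  contDiffOn_univ.1 h.smooth_Phi

theorem contDiff_n (h : IsConformalImmersionS3 Set.univ Φ lam n) : ContDiff ℝ ∞ n :=
  contDiffOn_univ.1 h.smooth_n

theorem inner_self_Phi (h : IsConformalImmersionS3 Set.univ Φ lam n) (x : RR2) :
    ⟪Φ x, Φ x⟫ = 1 := by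
  rw [real_inner_self_eq_norm_sq, h.mem_sphere x trivial, one_pow]

theorem inner_self_n (h : IsConformalImmersionS3 Set.univ Φ lam n) (x : RR2) :
    ⟪n x, n x⟫ = 1 := by
  rw [real_inner_self_eq_norm_sq, h.n_norm x trivial, one_pow]

theorem inner_d1_d1 (h : IsConformalImmersionS3 Set.univ Φ lam n) (x : RR2) :
    ⟪d1 Φ x, d1 Φ x⟫ = exp (2 * lam x) := by
  rw [real_inner_self_eq_norm_sq, h.conf_norm1 x trivial, ← exp_nat_mul]
  norm_num

theorem inner_d2_d2 (h : IsConformalImmersionS3 Set.univ Φ lam n) (x : RR2) :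
    ⟪d2 Φ x, d2 Φ x⟫ = exp (2 * lam x) := by
  rw [real_inner_self_eq_norm_sq, h.conf_norm2 x trivial, ← exp_nat_mul]
  norm_num

theorem inner_Phi_fderiv (h : IsConformalImmersionS3 Set.univ Φ lam n) (x v : RR2) :
    ⟪Φ x, fderiv ℝ Φ x v⟫ = 0 :=
  inner_fderiv_eq_zero_of_norm_eq_one (h.contDiff_Phi.differentiable (by simp) x)
    (fun y => h.mem_sphere y trivial) v

theorem orthonormal_frame (h : IsConformalImmersionS3 Set.univ Φ lam n) (x : RR2) :
    Orthonormal ℝ ![Φ x, exp (-lam x) • d1 Φ x, exp (-lam x) • d2 Φ x, n x] := by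
  have hscale : ∀ v : RR4, ‖v‖ = exp (lam x) → ‖exp (-lam x) • v‖ = 1 := fun v hv => by
    rw [norm_smul, hv, Real.norm_of_nonneg (exp_pos _).le, ← exp_add, neg_add_cancel, exp_zero]
  refine ⟨fun i => ?_, fun i j hij => ?_⟩
  · fin_cases i
    exacts [h.mem_sphere x trivial, hscale _ (h.conf_norm1 x trivial),
      hscale _ (h.conf_norm2 x trivial), h.n_norm x trivial]
  · have := h.conf_orth x trivial
    have := h.n_orth_Phi x trivial
    have := h.n_orth_d1 x trivial
    have := h.n_orth_d2 x trivial
    have : ⟪Φ x, d1 Φ x⟫ = 0 := h.inner_Phi_fderiv x _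
    have : ⟪Φ x, d2 Φ x⟫ = 0 := h.inner_Phi_fderiv x _
    fin_cases i <;> fin_cases j <;>
      simp_all [real_inner_smul_right, real_inner_comm]

theorem eq_inner_smul_add_inner_smul (h : IsConformalImmersionS3 Set.univ Φ lam n) {x : RR2}
    {v : RR4} (h₁ : ⟪d1 Φ x, v⟫ = 0) (h₂ : ⟪d2 Φ x, v⟫ = 0) :
    v = ⟪Φ x, v⟫ • Φ x + ⟪n x, v⟫ • n x := by
  have := (h.orthonormal_frame x).sum_inner_smul_eq (by simp) v
  simpa [Fin.sum_univ_four, real_inner_smul_left, h₁, h₂] using this.symm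

theorem inner_n_fderiv_Phi (h : IsConformalImmersionS3 Set.univ Φ lam n) (x v : RR2) :
    ⟪n x, fderiv ℝ Φ x v⟫ = 0 := by
  have hv : v = v.1 • ((1, 0) : RR2) + v.2 • ((0, 1) : RR2) := by ext <;> simp
  rw [hv, map_add, map_smul, map_smul, inner_add_right, real_inner_smul_right,
    real_inner_smul_right, ← d1, ← d2, h.n_orth_d1 x trivial, h.n_orth_d2 x trivial]
  ring

theorem inner_fderiv_n_Phi (h : IsConformalImmersionS3 Set.univ Φ lam n) (x v : RR2) :
    ⟪fderiv ℝ n x v, Φ x⟫ = 0 := by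
  rw [← neg_eq_zero, ← inner_fderiv_eq_neg_of_inner_const (h.contDiff_n.differentiable (by simp) x)
    (h.contDiff_Phi.differentiable (by simp) x) (fun y => h.n_orth_Phi y trivial)]
  exact h.inner_n_fderiv_Phi x v

theorem inner_fderiv_n_n (h : IsConformalImmersionS3 Set.univ Φ lam n) (x v : RR2) :
    ⟪fderiv ℝ n x v, n x⟫ = 0 := by
  rw [real_inner_comm]
  exact inner_fderiv_eq_zero_of_norm_eq_one (h.contDiff_n.differentiable (by simp) x)
    (fun y => h.n_norm y trivial) v

theorem inner_Phi_fderiv_fderiv (h : IsConformalImmersionS3 Set.univ Φ lam n) (x v w : RR2) :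
    ⟪Φ x, fderiv ℝ (fun y => fderiv ℝ Φ y v) x w⟫ = -⟪fderiv ℝ Φ x w, fderiv ℝ Φ x v⟫ :=
  inner_fderiv_fderiv_eq_neg_of_norm_eq_one (h.contDiff_Phi.of_le (by norm_cast))
    (fun y => h.mem_sphere y trivial) x v w

theorem christoffel_eq_zero (h : IsConformalImmersionS3 Set.univ Φ lam n)
    (hlam : ∀ x, lam x = l) (x : RR2) (i j k : Fin 2) :
    ⟪fderiv ℝ Φ x (coordVec i), fderiv ℝ (fun y => fderiv ℝ Φ y (coordVec j)) x (coordVec k)⟫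
      = 0 := by
  refine inner_fderiv_fderiv_eq_zero_of_inner_fderiv_const (h.contDiff_Phi.of_le (by norm_cast)) _
    (fun i j => ?_) x i j k
  fin_cases i <;> fin_cases j
  · exact ⟨_, fun y => (h.inner_d1_d1 y).trans (by rw [hlam])⟩
  · exact ⟨_, fun y => h.conf_orth y trivial⟩
  · exact ⟨_, fun y => (real_inner_comm _ _).trans (h.conf_orth y trivial)⟩
  · exact ⟨_, fun y => (h.inner_d2_d2 y).trans (by rw [hlam])⟩

theorem d1_d1_eq (h : IsConformalImmersionS3 Set.univ Φ lam n) (hlam : ∀ x, lam x = l) (x : RR2) :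
    d1 (d1 Φ) x = -exp (2 * l) • Φ x + I11 Φ n x • n x := by
  have hΦ : ⟪Φ x, d1 (d1 Φ) x⟫ = -⟪d1 Φ x, d1 Φ x⟫ := h.inner_Phi_fderiv_fderiv x _ _
  conv_lhs => rw [h.eq_inner_smul_add_inner_smul (v := d1 (d1 Φ) x)
    (h.christoffel_eq_zero hlam x 0 0 0) (h.christoffel_eq_zero hlam x 1 0 0)]
  rw [hΦ, h.inner_d1_d1, hlam, I11]

theorem d2_d1_eq (h : IsConformalImmersionS3 Set.univ Φ lam n) (hlam : ∀ x, lam x = l) (x : RR2) :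
    d2 (d1 Φ) x = I12 Φ n x • n x := by
  have hΦ : ⟪Φ x, d2 (d1 Φ) x⟫ = -⟪d2 Φ x, d1 Φ x⟫ := h.inner_Phi_fderiv_fderiv x _ _
  conv_lhs => rw [h.eq_inner_smul_add_inner_smul (v := d2 (d1 Φ) x)
    (h.christoffel_eq_zero hlam x 0 0 1) (h.christoffel_eq_zero hlam x 1 0 1)]
  rw [hΦ, real_inner_comm, h.conf_orth x trivial, neg_zero, zero_smul, zero_add, I12]

theorem d2_d2_eq (h : IsConformalImmersionS3 Set.univ Φ lam n) (hlam : ∀ x, lam x = l) (x : RR2) :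
    d2 (d2 Φ) x = -exp (2 * l) • Φ x + I22 Φ n x • n x := by
  have hΦ : ⟪Φ x, d2 (d2 Φ) x⟫ = -⟪d2 Φ x, d2 Φ x⟫ := h.inner_Phi_fderiv_fderiv x _ _
  conv_lhs => rw [h.eq_inner_smul_add_inner_smul (v := d2 (d2 Φ) x)
    (h.christoffel_eq_zero hlam x 0 1 1) (h.christoffel_eq_zero hlam x 1 1 1)]
  rw [hΦ, h.inner_d2_d2, hlam, I22]

theorem gauss_eq (h : IsConformalImmersionS3 Set.univ Φ lam n) (hlam : ∀ x, lam x = l) (x : RR2) :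
    exp (2 * l) ^ 2 + I11 Φ n x * I22 Φ n x = I12 Φ n x ^ 2 := by
  have hd1 := contDiff_d1 h.contDiff_Phi
  have hd2 := contDiff_d2 h.contDiff_Phi
  have h₁ : ⟪d2 Φ x, d2 (d1 (d1 Φ)) x⟫ = -⟪d2 (d2 Φ) x, d1 (d1 Φ) x⟫ :=
    inner_fderiv_eq_neg_of_inner_const (hd2.differentiable (by simp) x)
      ((contDiff_d1 hd1).differentiable (by simp) x) (fun y => h.christoffel_eq_zero hlam y 1 0 0) _
  have h₂ : ⟪d2 Φ x, d1 (d2 (d1 Φ)) x⟫ = -⟪d1 (d2 Φ) x, d2 (d1 Φ) x⟫ :=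
    inner_fderiv_eq_neg_of_inner_const (hd2.differentiable (by simp) x)
      ((contDiff_d2 hd1).differentiable (by simp) x) (fun y => h.christoffel_eq_zero hlam y 1 0 1) _
  rw [d1_d2_comm (hd1.of_le (by norm_cast)), d1_d2_comm (h.contDiff_Phi.of_le (by norm_cast)),
    h₁, neg_inj] at h₂
  rw [h.d1_d1_eq hlam, h.d2_d2_eq hlam, h.d2_d1_eq hlam] at h₂
  simp only [inner_add_left, inner_add_right, real_inner_smul_left, real_inner_smul_right,
    h.inner_self_Phi, h.inner_self_n, real_inner_comm (n x) (Φ x), h.n_orth_Phi x trivial] at h₂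
  linear_combination h₂

theorem d2s_I11_eq_d1s_I12 (h : IsConformalImmersionS3 Set.univ Φ lam n)
    (hlam : ∀ x, lam x = l) (x : RR2) : d2s (I11 Φ n) x = d1s (I12 Φ n) x := by
  have hn := h.contDiff_n.differentiable (by simp) x
  have hd1 := contDiff_d1 h.contDiff_Phi
  have e₁ : d2s (I11 Φ n) x = ⟪n x, d2 (d1 (d1 Φ)) x⟫ + ⟪fderiv ℝ n x (0, 1), d1 (d1 Φ) x⟫ :=
    fderiv_inner_apply ℝ hn ((contDiff_d1 hd1).differentiable (by simp) x) _
  have e₂ : d1s (I12 Φ n) x = ⟪n x, d1 (d2 (d1 Φ)) x⟫ + ⟪fderiv ℝ n x (1, 0), d2 (d1 Φ) x⟫ :=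
    fderiv_inner_apply ℝ hn ((contDiff_d2 hd1).differentiable (by simp) x) _
  rw [e₁, e₂, d1_d2_comm (hd1.of_le (by norm_cast)), h.d1_d1_eq hlam, h.d2_d1_eq hlam]
  simp only [inner_add_right, real_inner_smul_right, h.inner_fderiv_n_Phi, h.inner_fderiv_n_n,
    mul_zero, add_zero]

theorem d1s_I22_eq_d2s_I12 (h : IsConformalImmersionS3 Set.univ Φ lam n)
    (hlam : ∀ x, lam x = l) (x : RR2) : d1s (I22 Φ n) x = d2s (I12 Φ n) x := by
  have hn := h.contDiff_n.differentiable (by simp) x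
  have hd1 := contDiff_d1 h.contDiff_Phi
  have hd2 := contDiff_d2 h.contDiff_Phi
  have e₁ : d1s (I22 Φ n) x = ⟪n x, d1 (d2 (d2 Φ)) x⟫ + ⟪fderiv ℝ n x (1, 0), d2 (d2 Φ) x⟫ :=
    fderiv_inner_apply ℝ hn ((contDiff_d2 hd2).differentiable (by simp) x) _
  have e₂ : d2s (I12 Φ n) x = ⟪n x, d2 (d2 (d1 Φ)) x⟫ + ⟪fderiv ℝ n x (0, 1), d2 (d1 Φ) x⟫ :=
    fderiv_inner_apply ℝ hn ((contDiff_d2 hd1).differentiable (by simp) x) _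
  have hsymm : d1 (d2 Φ) = d2 (d1 Φ) := funext (d1_d2_comm (h.contDiff_Phi.of_le (by norm_cast)))
  rw [e₁, e₂, d1_d2_comm (hd2.of_le (by norm_cast)), hsymm, h.d2_d2_eq hlam, h.d2_d1_eq hlam]
  simp only [inner_add_right, real_inner_smul_right, h.inner_fderiv_n_Phi, h.inner_fderiv_n_n,
    mul_zero, add_zero]

theorem exists_traceFree_const (h : IsConformalImmersionS3 Set.univ Φ lam n)
    (hlam : ∀ x, lam x = l) {H : ℝ} (hH : ∀ x, meanCurv Φ lam n x = H) :
    ∃ a b : ℝ, (∀ x, I011 Φ n x = a) ∧ (∀ x, I012 Φ n x = b) ∧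
      a ^ 2 + b ^ 2 = exp (2 * l) ^ 2 * (1 + H ^ 2) := by
  have htr := I11_add_I22_eq_of_meanCurv_eq hlam hH
  have hI : ∀ f : RR2 → RR4, ContDiff ℝ ∞ f → Differentiable ℝ (fun x => ⟪n x, f x⟫) :=
    fun f hf => (h.contDiff_n.inner ℝ hf).differentiable (by simp)
  have hΦ := h.contDiff_Phi
  have hI11 := hI _ (contDiff_d1 (contDiff_d1 hΦ))
  have hI12 : Differentiable ℝ (I012 Φ n) := hI _ (contDiff_d2 (contDiff_d1 hΦ))
  have hI22 := hI _ (contDiff_d2 (contDiff_d2 hΦ))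
  have ha₁ : I011 Φ n = fun x => I11 Φ n x - H * exp (2 * l) := by
    funext x; rw [I011]; linarith [htr x]
  have ha₂ : I011 Φ n = fun x => H * exp (2 * l) - I22 Φ n x := by
    funext x; rw [I011]; linarith [htr x]
  have hcr₁ : ∀ x, d1s (I011 Φ n) x = -d2s (I012 Φ n) x := fun x => by
    rw [d1s, ha₂, fderiv_const_sub]
    exact congrArg Neg.neg (h.d1s_I22_eq_d2s_I12 hlam x)
  have hcr₂ : ∀ x, d2s (I011 Φ n) x = d1s (I012 Φ n) x := fun x => by
    rw [d2s, ha₁, fderiv_sub_const]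
    exact h.d2s_I11_eq_d1s_I12 hlam x
  have hr : ∀ x, I011 Φ n x ^ 2 + I012 Φ n x ^ 2 = exp (2 * l) ^ 2 * (1 + H ^ 2) := fun x => by
    rw [I011, I012]
    linear_combination
      -h.gauss_eq hlam x + ((I11 Φ n x + I22 Φ n x) / 4 + H * exp (2 * l) / 2) * htr x
  have hconst := eq_of_sq_add_sq_const_of_cauchyRiemann (ha₁ ▸ hI11.sub_const _) hI12 hcr₁ hcr₂ hr
  exact ⟨_, _, fun x => (hconst x 0).1, fun x => (hconst x 0).2, hr 0⟩

end IsConformalImmersionS3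

theorem exists_coeffs_strictly_elliptic {a b l H : ℝ}
    (hab : a ^ 2 + b ^ 2 = exp (2 * l) ^ 2 * (1 + H ^ 2)) :
    ∃ Q₁ Q₂ : ℝ, H = 4 * exp (-(4 * l)) * (Q₁ * a - Q₂ * b) ∧
      4 * exp (-(2 * l)) * Real.sqrt (Q₁ ^ 2 + Q₂ ^ 2) < 1 := by
  have he : exp (-(4 * l)) * exp (2 * l) ^ 2 = 1 := by
    rw [sq, ← exp_add, ← exp_add]; ring_nf; exact exp_zero
  have he' : exp (-(2 * l)) ^ 2 = exp (-(4 * l)) := by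
    rw [← exp_nat_mul]; ring_nf
  have hpos : 0 < 1 + H ^ 2 := by positivity
  refine ⟨H * a / (4 * (1 + H ^ 2)), -(H * b) / (4 * (1 + H ^ 2)), ?_, ?_⟩
  · field_simp
    rw [sub_neg_eq_add, hab]
    linear_combination (-H * (1 + H ^ 2)) * he
  · have hQ : (4 * exp (-(2 * l))) ^ 2 * ((H * a / (4 * (1 + H ^ 2))) ^ 2
        + (-(H * b) / (4 * (1 + H ^ 2))) ^ 2) = H ^ 2 / (1 + H ^ 2) := by
      field_simp
      rw [hab, he']
      linear_combination H ^ 2 * (1 + H ^ 2) * he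
    rw [← Real.sqrt_sq (by positivity : 0 ≤ 4 * exp (-(2 * l))), ← Real.sqrt_mul (sq_nonneg _),
      hQ, Real.sqrt_lt' one_pos, one_pow, div_lt_one hpos]
    linarith

theorem flat_cmc_torus_strictly_elliptic_general
    (Φ : RR2 → RR4) (lam : RR2 → ℝ) (n : RR2 → RR4)
    (h : IsConformalImmersionS3 Set.univ Φ lam n)
    (hlam : ∀ x y : RR2, lam x = lam y)
    (hH : ∀ x y : RR2, meanCurv Φ lam n x = meanCurv Φ lam n y) :
    ∃ Q₁ Q₂ : ℝ, ∀ x : RR2,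
      meanCurv Φ lam n x
        = 4 * exp (-(4 * lam x)) * (Q₁ * I011 Φ n x - Q₂ * I012 Φ n x) ∧
      4 * exp (-(2 * lam x)) * Real.sqrt (Q₁ ^ 2 + Q₂ ^ 2) < 1 := by
  obtain ⟨a, b, ha, hb, hab⟩ := h.exists_traceFree_const (fun x => hlam x 0) (fun x => hH x 0)
  obtain ⟨Q₁, Q₂, hQ, hQ_lt⟩ := exists_coeffs_strictly_elliptic hab
  refine ⟨Q₁, Q₂, fun x => ?_⟩
  rw [hH x 0, hlam x 0, ha, hb]
  exact ⟨hQ, hQ_lt⟩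

/-- A flat CMC torus in `S³` (a smooth doubly periodic conformal immersion
whose conformal factor and mean curvature are constant) satisfies the strictly elliptic
conformally constrained minimal surface equation: there are constants `Q₁, Q₂` with
`H = 4 e^{-4λ}(Q₁ I⁰₁₁ - Q₂ I⁰₁₂)` and `4 e^{-2λ} √(Q₁² + Q₂²) < 1` everywhere. -/
theorem flat_cmc_torus_strictly_elliptic
    (v₁ v₂ : RR2) (hv : LinearIndependent ℝ ![v₁, v₂])
    (Φ : RR2 → RR4) (lam : RR2 → ℝ) (n : RR2 → RR4)
    (h : IsConformalImmersionS3 Set.univ Φ lam n)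
    (hper : ∀ (x : RR2) (m k : ℤ), Φ (x + m • v₁ + k • v₂) = Φ x)
    (hlam : ∀ x y : RR2, lam x = lam y)
    (hH : ∀ x y : RR2, meanCurv Φ lam n x = meanCurv Φ lam n y) :
    ∃ Q₁ Q₂ : ℝ, ∀ x : RR2,
      meanCurv Φ lam n x
        = 4 * exp (-(4 * lam x)) * (Q₁ * I011 Φ n x - Q₂ * I012 Φ n x) ∧
      4 * exp (-(2 * lam x)) * Real.sqrt (Q₁ ^ 2 + Q₂ ^ 2) < 1 :=
  flat_cmc_torus_strictly_elliptic_general Φ lam n h hlam hH
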